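/- In the simplex setting with m ≥ 4, the element X_m = Σ_{σ∈A_m} ( σ(Δ_{m−1}) · Σ_{τ∈A_m, τ≠σ} τ(Δ_{m−1}) ) satisfies X_m = α_m·Sq_m + β_m·Adj_m + γ_m·Op_m, where α_m = h_m(h_m − 1), β_m = h_m(h_m − (m−3)/(m−2)), and γ_m = h_m(h_m − (m−4)/(m−2)), with h_m = (m−2)·(m−1)!/2. -/

import Mathlib

/-!
Write `u σ = σ(Δ_{m-1})`. Since `Δ_{m-1}` is the sum of the `Δ_e` over the edges avoiding the
vertex `m`, `u σ` is the sum of the `Δ_e` over the edges avoiding `σ(m)`, and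
`X_m = (∑ σ, u σ)² - ∑ σ, (u σ)²`. The coefficient of `Δ_e Δ_f` is therefore
`n(e) n(f) - n(e ∪ f)`, where `n(A)` counts the `σ ∈ A_m` with `σ(m) ∉ A`. As `A_m` acts
transitively on `{1,…,m}`, `n(A) = (m - |A|)(m-1)!/2 = h_m (m - |A|)/(m - 2)`, so the
coefficient depends only on `|e ∪ f| ∈ {2, 3, 4}`, i.e. on whether `e = f`, `e` and `f` share one
vertex, or `e` and `f` are disjoint.
-/

noncomputable section
open scoped Classical

/-- The Laplacian `Δ = |S|·1 - Σ_{s ∈ S} s` in the real group algebra `ℝ[G]`. -/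
def lap {G : Type*} [Group G] (S : Finset G) : MonoidAlgebra ℝ G :=
  (S.card : MonoidAlgebra ℝ G) - ∑ s ∈ S, MonoidAlgebra.of ℝ G s

/-- The star involution on `ℝ[G]` induced by `g ↦ g⁻¹`. -/
def starG {G : Type*} [Group G] (x : MonoidAlgebra ℝ G) : MonoidAlgebra ℝ G :=
  MonoidAlgebra.mapDomain (fun g => g⁻¹) x

/-- `g` lies in the ball of radius `R` about the identity in the word metric
induced by the (symmetric) set `S`. -/
def inBall {G : Type*} [Group G] (S : Set G) (R : ℕ) (g : G) : Prop :=
  ∃ l : List G, (∀ x ∈ l, x ∈ S) ∧ l.length ≤ R ∧ l.prod = g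

/-- `x ∈ Σ²_R ℝ[G]`: `x` is a finite sum of hermitian squares `ξ_i* ξ_i` with each
`ξ_i` supported in the ball of radius `R` about the identity. -/
def SOS {G : Type*} [Group G] (S : Set G) (R : ℕ) (x : MonoidAlgebra ℝ G) : Prop :=
  ∃ (N : ℕ) (ξ : Fin N → MonoidAlgebra ℝ G),
    (∀ i, ∀ g ∈ (ξ i).coeff.support, inBall S R g) ∧
    x = ∑ i, starG (ξ i) * ξ i

/-- The simplex setting: a group `G` with a finite symmetric generating set `S`
(with `1 ∉ S`), an action of the alternating group `A_m` on `G` by automorphisms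
preserving `S`, and an `A_m`-equivariant labelling of `S` by edges (2-element
subsets) of `{1,…,m}` such that generators with disjoint labels commute. -/
structure SimplexSetting (m : ℕ) (G : Type*) [Group G] where
  S : Finset G
  one_not_mem : (1 : G) ∉ S
  symm : ∀ s ∈ S, s⁻¹ ∈ S
  generates : Subgroup.closure (S : Set G) = ⊤
  act : alternatingGroup (Fin m) →* MulAut G
  act_mem : ∀ (σ : alternatingGroup (Fin m)), ∀ s ∈ S, act σ s ∈ S
  lbl : G → Finset (Fin m)
  lbl_card : ∀ s ∈ S, (lbl s).card = 2
  lbl_equivariant : ∀ (σ : alternatingGroup (Fin m)), ∀ s ∈ S,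
    lbl (act σ s) = (lbl s).image (σ : Equiv.Perm (Fin m))
  comm : ∀ s ∈ S, ∀ t ∈ S, Disjoint (lbl s) (lbl t) → Commute s t

namespace SimplexSetting

variable {m : ℕ} {G : Type*} [Group G] (P : SimplexSetting m G)

/-- The set `E_n` of edges of the simplex spanned by the first `n` vertices. -/
def edges (m n : ℕ) : Finset (Finset (Fin m)) :=
  Finset.univ.filter (fun e => e.card = 2 ∧ ∀ i ∈ e, (i : ℕ) < n)

/-- `S_e`: the generators labelled by the edge `e`. -/
def Se (e : Finset (Fin m)) : Finset G := P.S.filter (fun s => P.lbl s = e)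

/-- The edge Laplacian `Δ_e = |S_e|·1 - Σ_{t ∈ S_e} t`. -/
def De (e : Finset (Fin m)) : MonoidAlgebra ℝ G :=
  ((P.Se e).card : MonoidAlgebra ℝ G) - ∑ t ∈ P.Se e, MonoidAlgebra.of ℝ G t

/-- `Δ_n = Σ_{e ∈ E_n} Δ_e`. -/
def Dn (n : ℕ) : MonoidAlgebra ℝ G := ∑ e ∈ edges m n, P.De e

/-- `Sq_n = Σ_{e ∈ E_n} Δ_e²`. -/
def Sq (n : ℕ) : MonoidAlgebra ℝ G := ∑ e ∈ edges m n, (P.De e) ^ 2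

/-- `Adj_n`: the sum of `Δ_e Δ_f` over ordered pairs of edges of `E_n` sharing
exactly one vertex. -/
def Adj (n : ℕ) : MonoidAlgebra ℝ G :=
  ∑ e ∈ edges m n, ∑ f ∈ (edges m n).filter (fun f => (e ∩ f).card = 1), P.De e * P.De f

/-- `Op_n`: the sum of `Δ_e Δ_f` over ordered pairs of disjoint edges of `E_n`. -/
def Op (n : ℕ) : MonoidAlgebra ℝ G :=
  ∑ e ∈ edges m n, ∑ f ∈ (edges m n).filter (fun f => e ∩ f = ∅), P.De e * P.De f

/-- The induced action of `A_m` on the group algebra `ℝ[G]`. -/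
def algAct (σ : alternatingGroup (Fin m)) (x : MonoidAlgebra ℝ G) : MonoidAlgebra ℝ G :=
  MonoidAlgebra.mapDomain (P.act σ) x

/-- `h_n = (n-2)·(n-1)!/2`, as a real number. -/
def hr (n : ℕ) : ℝ := ((n : ℝ) - 2) * (Nat.factorial (n - 1)) / 2

end SimplexSetting

open SimplexSetting

open Finset

lemma sum_mul_sum_erase {R ι : Type*} [NonUnitalNonAssocRing R] [DecidableEq ι]
    (s : Finset ι) (u : ι → R) :
    ∑ i ∈ s, u i * ∑ j ∈ s.erase i, u j = (∑ i ∈ s, u i) * ∑ i ∈ s, u i - ∑ i ∈ s, u i * u i := by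
  rw [sum_mul, ← sum_sub_distrib]
  refine sum_congr rfl fun i hi => ?_
  rw [sum_erase_eq_sub hi, mul_sub]

lemma sum_sum_filter_eq_sum_card_nsmul {ι κ M : Type*} [Fintype ι] [AddCommMonoid M]
    (E : Finset κ) (p : ι → κ → Prop) [∀ i k, Decidable (p i k)] (y : κ → M) :
    ∑ i, ∑ k ∈ E with p i k, y k = ∑ k ∈ E, #{i | p i k} • y k := by
  rw [sum_comm' (t' := E) (s' := fun k => univ.filter (p · k)) (by simp [and_comm])]
  simp only [sum_const]

lemma sum_mul_sum_erase_of_sum_filter {ι κ R : Type*} [Fintype ι] [DecidableEq ι] [Ring R]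
    (E : Finset κ) (p : ι → κ → Prop) [∀ i k, Decidable (p i k)] (x : κ → R) :
    ∑ i, (∑ k ∈ E with p i k, x k) * ∑ j ∈ univ.erase i, ∑ k ∈ E with p j k, x k =
      ∑ k ∈ E, ∑ l ∈ E,
        ((#{i | p i k} * #{i | p i l} - #{i | p i k ∧ p i l} : ℤ) • (x k * x l)) := by
  have hsquare : ∀ i, (∑ k ∈ E with p i k, x k) * ∑ k ∈ E with p i k, x k =
      ∑ kl ∈ E ×ˢ E with p i kl.1 ∧ p i kl.2, x kl.1 * x kl.2 := fun i => by
    rw [filter_product (p i) (p i), sum_product, sum_mul_sum]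
  rw [sum_mul_sum_erase, sum_sum_filter_eq_sum_card_nsmul, sum_mul_sum]
  simp_rw [hsquare]
  rw [sum_sum_filter_eq_sum_card_nsmul, sum_product, ← sum_sub_distrib]
  refine sum_congr rfl fun k _ => ?_
  rw [← sum_sub_distrib]
  refine sum_congr rfl fun l _ => ?_
  rw [smul_mul_smul_comm, sub_smul, ← Nat.cast_mul, natCast_zsmul, natCast_zsmul]

section TransitiveAction

open MulAction

variable {G X : Type*} [Group G] [Fintype G] [MulAction G X] [DecidableEq X]

lemma card_filter_smul_mem_eq_sum_card (v : X) (s : Finset X) :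
    #{g : G | g • v ∈ s} = ∑ k ∈ s, #{g : G | g • v = k} := by
  rw [card_eq_sum_card_fiberwise (f := fun g : G => g • v) (t := s) (by simp [Set.MapsTo])]
  refine sum_congr rfl fun k hk => ?_
  rw [filter_filter]
  exact congrArg card (filter_congr fun g _ => ⟨And.right, fun h => ⟨h ▸ hk, h⟩⟩)

lemma card_filter_smul_eq_mul_card [Fintype X] [IsPretransitive G X] (v j : X) :
    #{g : G | g • v = j} * Fintype.card X = Fintype.card G := by
  have hfiber : ∀ k, #{g : G | g • v = k} = #{g : G | g • v = j} := fun k => by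
    obtain ⟨a, rfl⟩ := exists_smul_eq G j k
    refine card_bij' (fun g _ => a⁻¹ * g) (fun g _ => a * g) ?_ ?_ ?_ ?_ <;>
      simp +contextual [mul_smul]
  have hsum := card_filter_smul_mem_eq_sum_card (G := G) v univ
  simp_rw [mem_univ, filter_true, card_univ, hfiber, sum_const, card_univ, smul_eq_mul] at hsum
  rw [hsum, mul_comm]

lemma card_filter_smul_notMem_mul_card [Fintype X] [IsPretransitive G X] (v : X)
    (A : Finset X) :
    #{g : G | g • v ∉ A} * Fintype.card X = (Fintype.card X - #A) * Fintype.card G := by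
  simp_rw [← mem_compl, card_filter_smul_mem_eq_sum_card, sum_mul, card_filter_smul_eq_mul_card,
    sum_const, card_compl, smul_eq_mul]

end TransitiveAction

lemma card_filter_alternatingGroup_apply_notMem {m : ℕ} (hm : 3 ≤ m) (v : Fin m)
    (A : Finset (Fin m)) :
    (#{σ : alternatingGroup (Fin m) | (σ : Equiv.Perm (Fin m)) v ∉ A} : ℝ) =
      hr m * (((m : ℝ) - #A) / ((m : ℝ) - 2)) := by
  have : Nontrivial (Fin m) := Fin.nontrivial_iff_two_le.mpr (by omega)
  have := alternatingGroup.isPretransitive_of_three_le_card (Fin m) (by simpa using hm)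
  have hcount := card_filter_smul_notMem_mul_card (G := alternatingGroup (Fin m)) v A
  have hhalf := two_mul_card_alternatingGroup (α := Fin m)
  simp only [Subgroup.smul_def, Equiv.Perm.smul_def, Fintype.card_fin, Fintype.card_perm]
    at hcount hhalf
  obtain ⟨k, rfl⟩ : ∃ k, m = k + 1 := ⟨m - 1, by omega⟩
  have hA : #A ≤ k + 1 := by simpa using card_le_univ A
  rw [Nat.factorial_succ] at hhalf
  rify [hA] at hcount hhalf
  have hk : (k : ℝ) - 1 ≠ 0 := by
    have : (2 : ℝ) ≤ k := by exact_mod_cast (by omega : 2 ≤ k)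
    linarith
  simp only [hr, Nat.add_sub_cancel, Nat.cast_add, Nat.cast_one]
  rw [show (k : ℝ) + 1 - 2 = k - 1 by ring]
  field_simp
  apply mul_left_cancel₀ (show (k : ℝ) + 1 ≠ 0 by positivity)
  linear_combination 2 * hcount + ((k : ℝ) + 1 - #A) * hhalf

lemma cast_card_filter_apply_notMem_mul_sub {m : ℕ} (hm : 3 ≤ m) (v : Fin m)
    {e f : Finset (Fin m)} (he : #e = 2) (hf : #f = 2) :
    ((#{σ : alternatingGroup (Fin m) | (σ : Equiv.Perm (Fin m)) v ∉ e} *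
        #{σ : alternatingGroup (Fin m) | (σ : Equiv.Perm (Fin m)) v ∉ f} -
        #{σ : alternatingGroup (Fin m) | (σ : Equiv.Perm (Fin m)) v ∉ e ∧
          (σ : Equiv.Perm (Fin m)) v ∉ f} : ℤ) : ℝ) =
      hr m * (hr m - ((m : ℝ) - #(e ∪ f)) / ((m : ℝ) - 2)) := by
  have hm2 : (m : ℝ) - 2 ≠ 0 := by
    have : (3 : ℝ) ≤ m := by exact_mod_cast hm
    linarith
  simp only [← not_or, ← mem_union]
  push_cast
  rw [card_filter_alternatingGroup_apply_notMem hm, card_filter_alternatingGroup_apply_notMem hm,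
    card_filter_alternatingGroup_apply_notMem hm, he, hf]
  field_simp
  ring

lemma sum_split_card_union_of_card_eq_two {α M : Type*} [DecidableEq α] [AddCommMonoid M]
    {E : Finset (Finset α)} (hE : ∀ f ∈ E, #f = 2) {e : Finset α} (he : e ∈ E)
    (g : ℕ → Finset α → M) :
    ∑ f ∈ E, g #(e ∪ f) f =
      g 2 e + ∑ f ∈ E with #(e ∩ f) = 1, g 3 f + ∑ f ∈ E with e ∩ f = ∅, g 4 f := by
  have he2 := hE e he
  have hunion : ∀ f ∈ E, #(e ∪ f) = 4 - #(e ∩ f) := fun f hf => by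
    have := card_union_add_card_inter e f
    have := hE f hf
    omega
  have hinter : ∀ f ∈ E, #(e ∩ f) ∈ range 3 := fun f _ => by
    have := card_le_card (inter_subset_left (s₁ := e) (s₂ := f))
    rw [mem_range]
    omega
  have hdiag : {f ∈ E | #(e ∩ f) = 2} = {e} := by
    ext f
    simp only [mem_filter, mem_singleton]
    constructor
    · rintro ⟨hf, h2⟩
      have hf2 := hE f hf
      rw [← eq_of_subset_of_card_le (inter_subset_right (s₁ := e) (s₂ := f)) (by omega),
        eq_of_subset_of_card_le (inter_subset_left (s₁ := e) (s₂ := f)) (by omega)]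
    · rintro rfl
      simp [he, he2]
  rw [← sum_fiberwise_of_maps_to hinter]
  simp only [sum_range_succ, sum_range_zero, zero_add, hdiag, sum_singleton, card_eq_zero]
  have hcoeff : ∀ k, ∀ f ∈ {f ∈ E | #(e ∩ f) = k}, g #(e ∪ f) f = g (4 - k) f :=
    fun k f hf => by
      rw [mem_filter] at hf
      rw [hunion f hf.1, hf.2]
  have hdisj : ∀ f ∈ {f ∈ E | e ∩ f = ∅}, g #(e ∪ f) f = g 4 f := fun f hf => by
    rw [mem_filter, ← card_eq_zero] at hf
    exact hcoeff 0 f (mem_filter.2 hf)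
  rw [sum_congr rfl (hcoeff 1), sum_congr rfl hdisj, union_self, he2]
  abel

namespace SimplexSetting

variable {m : ℕ} {G : Type*} [Group G] (P : SimplexSetting m G)

lemma card_of_mem_edges {n : ℕ} {e : Finset (Fin m)} (he : e ∈ edges m n) : #e = 2 :=
  (mem_filter.1 he).2.1

lemma mem_edges_sub_one_iff {L : Fin m} (hL : (L : ℕ) = m - 1) {e : Finset (Fin m)} :
    e ∈ edges m (m - 1) ↔ e ∈ edges m m ∧ L ∉ e := by
  simp only [edges, mem_filter, mem_univ, true_and, Fin.is_lt, implies_true, and_true]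
  refine and_congr_right fun _ => ⟨fun h hL' => by simpa [hL] using h L hL', fun h i hi => ?_⟩
  have : i ≠ L := by rintro rfl; exact h hi
  have := Fin.val_ne_of_ne this
  omega

lemma algAct_eq_mapDomainRingHom (σ : alternatingGroup (Fin m)) :
    P.algAct σ = MonoidAlgebra.mapDomainRingHom ℝ (P.act σ : G →* G) := rfl

lemma Se_image (σ : alternatingGroup (Fin m)) (e : Finset (Fin m)) :
    P.Se (e.image (σ : Equiv.Perm (Fin m))) = (P.Se e).image (P.act σ) := by
  ext t
  simp only [Se, mem_filter, mem_image]
  constructor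
  · rintro ⟨htS, hlbl⟩
    refine ⟨P.act σ⁻¹ t, ⟨P.act_mem σ⁻¹ t htS, ?_⟩, by simp⟩
    rw [P.lbl_equivariant σ⁻¹ t htS, hlbl, image_image]
    simp
  · rintro ⟨s, ⟨hsS, rfl⟩, rfl⟩
    exact ⟨P.act_mem σ s hsS, P.lbl_equivariant σ s hsS⟩

lemma algAct_De (σ : alternatingGroup (Fin m)) (e : Finset (Fin m)) :
    P.algAct σ (P.De e) = P.De (e.image (σ : Equiv.Perm (Fin m))) := by
  have hinj := (P.act σ).injective
  simp only [algAct_eq_mapDomainRingHom, De, map_sub, map_natCast, map_sum, Se_image,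
    card_image_of_injective _ hinj, sum_image hinj.injOn]
  simp [MonoidAlgebra.of_apply]

lemma algAct_Dn_sub_one (σ : alternatingGroup (Fin m)) {L : Fin m} (hL : (L : ℕ) = m - 1) :
    P.algAct σ (P.Dn (m - 1)) =
      ∑ f ∈ edges m m with (σ : Equiv.Perm (Fin m)) L ∉ f, P.De f := by
  rw [Dn, algAct_eq_mapDomainRingHom, map_sum]
  refine sum_equiv (σ : Equiv.Perm (Fin m)).finsetCongr (fun e => ?_) (fun e _ => ?_)
  · rw [mem_edges_sub_one_iff hL, mem_filter]
    simp [edges]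
  · rw [← algAct_eq_mapDomainRingHom, algAct_De, Equiv.finsetCongr_apply, map_eq_image]
    rfl

lemma sum_sum_edges_smul_De_mul_De (n : ℕ) (a : ℕ → ℝ) :
    ∑ e ∈ edges m n, ∑ f ∈ edges m n, a #(e ∪ f) • (P.De e * P.De f) =
      a 2 • P.Sq n + a 3 • P.Adj n + a 4 • P.Op n := by
  simp only [Sq, Adj, Op, smul_sum, ← sum_add_distrib]
  refine sum_congr rfl fun e he => ?_
  rw [sum_split_card_union_of_card_eq_two (fun _ => card_of_mem_edges) he
    (fun k f => a k • (P.De e * P.De f)), sq]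

end SimplexSetting

/-- `X_m = α_m·Sq_m + β_m·Adj_m + γ_m·Op_m` with `α_m = h_m(h_m - 1)`,
`β_m = h_m(h_m - (m-3)/(m-2))`, `γ_m = h_m(h_m - (m-4)/(m-2))`. -/
theorem Xm_eq_combination {m : ℕ} {G : Type*} [Group G]
    (P : SimplexSetting m G) (hm : 4 ≤ m) :
    (∑ σ : alternatingGroup (Fin m),
        P.algAct σ (P.Dn (m - 1)) *
          ∑ τ ∈ Finset.univ.erase σ, P.algAct τ (P.Dn (m - 1))) =
      (hr m * (hr m - 1)) • P.Sq m +
      (hr m * (hr m - ((m : ℝ) - 3) / ((m : ℝ) - 2))) • P.Adj m +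
      (hr m * (hr m - ((m : ℝ) - 4) / ((m : ℝ) - 2))) • P.Op m := by
  have hm2 : (m : ℝ) - 2 ≠ 0 := by
    have : (4 : ℝ) ≤ m := by exact_mod_cast hm
    linarith
  let L : Fin m := ⟨m - 1, by omega⟩
  let a : ℕ → ℝ := fun k => hr m * (hr m - ((m : ℝ) - k) / ((m : ℝ) - 2))
  simp_rw [P.algAct_Dn_sub_one _ (L := L) rfl]
  rw [sum_mul_sum_erase_of_sum_filter]
  refine (sum_congr rfl fun e he => sum_congr rfl fun f hf => ?_).trans
    ((P.sum_sum_edges_smul_De_mul_De m a).trans ?_)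
  · rw [← Int.cast_smul_eq_zsmul ℝ, cast_card_filter_apply_notMem_mul_sub (by omega) L
      (card_of_mem_edges he) (card_of_mem_edges hf)]
  · norm_num [a, div_self hm2]
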